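/- There exist a map Φ : ℝ² → ℝ² and an admissible function α : ℝ → ℝ such that: (a) Φ restricts to a bijection from Q₁ := [0,1] × [0,∞) onto Q := [0,∞) × [0,∞), continuous on Q₁ and with continuous inverse on Q; (b) Φ is C^∞ on Q₁ ∖ {(1,0)} and the inverse is C^∞ on Q ∖ {(1,0)} (in the sense of ContDiffOn); (c) there is a set U, relatively open in Q₁ and containing ({0} × [0,∞)) ∪ ([0,1) × {0}), with Φ(p) = p for all p ∈ U; (d) there is a set V, relatively open in Q₁ and containing {1} × (0,∞), with Φ(x, y) = (1 + y, 1 − x) for all (x, y) ∈ V; (e) there is δ > 0 such that Φ(1 − r·cos θ, r·sin θ) = (1 − r·cos(α(θ)), r·sin(α(θ))) for all r ∈ [0, δ] and θ ∈ [0, π/2]. -/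

import Mathlib

open Real Set

/-- A `C^∞` function `α : ℝ → ℝ` is *admissible* if its derivative is strictly
positive on `[0, π/2]`, `α t = t` on `[0, π/6]`, and `α t = t + π/2` on
`[π/3, π/2]`. -/
def Admissible (α : ℝ → ℝ) : Prop :=
  ContDiff ℝ (⊤ : ℕ∞) α ∧
    (∀ t ∈ Icc 0 (π / 2), 0 < deriv α t) ∧
    (∀ t ∈ Icc 0 (π / 6), α t = t) ∧
    (∀ t ∈ Icc (π / 3) (π / 2), α t = t + π / 2)

/-- The strip `Q₁ = [0,1] × [0,∞)`. -/
def strip : Set (ℝ × ℝ) := Icc (0 : ℝ) 1 ×ˢ Ici (0 : ℝ)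

/-- The quadrant `Q = [0,∞) × [0,∞)`. -/
def quadrant : Set (ℝ × ℝ) := Ici (0 : ℝ) ×ˢ Ici (0 : ℝ)

/-!
The map rotates each point `p` of the strip about the corner `(1, 0)` through an angle
`turn p ∈ [0, π/2]`, so it preserves the distance to the corner. Near the corner `turn` depends
only on the polar angle `θ`, far from it only on the position; it vanishes near the left and
bottom edges and equals `π/2` near the right edge. On each circle about the corner,
`θ ↦ θ + turn` is strictly increasing on `[0, π/2]` and runs from `0` to `π`, so the map is a
bijection onto the quadrant. Since `∂turn/∂θ ≥ 0`, the derivative of the map is invertible, and the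
inverse function theorem makes the inverse smooth away from the corner.
-/

open Function Filter Topology

theorem HasDerivAt.nonneg_of_monotoneOn_nhds {f : ℝ → ℝ} {f' x : ℝ} {s : Set ℝ}
    (hf : HasDerivAt f f' x) (hs : s ∈ 𝓝 x) (hmono : MonotoneOn f s) : 0 ≤ f' :=
  hf.hasDerivWithinAt.nonneg_of_monotoneOn
    (by simpa using (PerfectSpace.univ_preperfect x (mem_univ x)).nhds_inter hs) hmono

theorem ContDiffAt.contDiffAt_of_leftInvOn {𝕜 E : Type*} [RCLike 𝕜] [NormedAddCommGroup E]
    [NormedSpace 𝕜 E] [FiniteDimensional 𝕜 E] {f g : E → E} {s : Set E} {p : E}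
    {n : WithTop ℕ∞} (hf : ContDiffAt 𝕜 n f p) (hn : n ≠ 0)
    (hinj : Injective (fderiv 𝕜 f p)) (hs : s ∈ 𝓝 p) (hg : LeftInvOn g f s) :
    ContDiffAt 𝕜 n g (f p) := by
  have := FiniteDimensional.complete 𝕜 E
  let e : E ≃L[𝕜] E :=
    (LinearEquiv.ofInjectiveEndo (fderiv 𝕜 f p : E →ₗ[𝕜] E) hinj).toContinuousLinearEquiv
  have hf' : HasFDerivAt f (e : E →L[𝕜] E) p := (hf.differentiableAt hn).hasFDerivAt
  set L := hf.localInverse hf' hn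
  have hL : ContDiffAt 𝕜 n L (f p) := hf.to_localInverse hf' hn
  have hright : ∀ᶠ w in 𝓝 (f p), f (L w) = w :=
    (hf.hasStrictFDerivAt' hf' hn).eventually_right_inverse
  have hLp : L (f p) = p := hf.localInverse_apply_image hf' hn
  have hmem : ∀ᶠ w in 𝓝 (f p), L w ∈ s :=
    hL.continuousAt.tendsto (by rw [hLp]; exact hs)
  refine hL.congr_of_eventuallyEq ?_
  filter_upwards [hright, hmem] with w hw hws
  calc g w = g (f (L w)) := by rw [hw]
    _ = L w := hg hws

theorem ContDiffAt.contDiffWithinAt_of_eqOn {𝕜 E F : Type*} [NontriviallyNormedField 𝕜]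
    [NormedAddCommGroup E] [NormedSpace 𝕜 E] [NormedAddCommGroup F] [NormedSpace 𝕜 F]
    {f g : E → F} {s U : Set E} {x : E} {n : WithTop ℕ∞} (hf : ContDiffAt 𝕜 n f x) (hU : IsOpen U)
    (hxU : x ∈ U) (hxs : x ∈ s) (heq : EqOn g f (U ∩ s)) : ContDiffWithinAt 𝕜 n g s x :=
  hf.contDiffWithinAt.congr_of_eventuallyEq_of_mem
    (eventually_of_mem (inter_mem_nhdsWithin s (hU.mem_nhds hxU)) fun _ hy => heq ⟨hy.2, hy.1⟩)
    hxs

namespace CornerStraightening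

noncomputable section

lemma mem_strip {p : ℝ × ℝ} : p ∈ strip ↔ 0 ≤ p.1 ∧ p.1 ≤ 1 ∧ 0 ≤ p.2 := and_assoc

lemma mem_quadrant {p : ℝ × ℝ} : p ∈ quadrant ↔ 0 ≤ p.1 ∧ 0 ≤ p.2 := Iff.rfl

def ramp (a b x : ℝ) : ℝ := smoothTransition ((x - a) / (b - a))

section Ramp

variable {a b : ℝ}

lemma ramp_nonneg (a b x : ℝ) : 0 ≤ ramp a b x := smoothTransition.nonneg _

lemma ramp_le_one (a b x : ℝ) : ramp a b x ≤ 1 := smoothTransition.le_one _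

lemma ramp_of_le (hab : a < b) {x : ℝ} (hx : x ≤ a) : ramp a b x = 0 :=
  smoothTransition.zero_of_nonpos (div_nonpos_of_nonpos_of_nonneg (by linarith) (by linarith))

lemma ramp_of_ge (hab : a < b) {x : ℝ} (hx : b ≤ x) : ramp a b x = 1 :=
  smoothTransition.one_of_one_le ((one_le_div (by linarith)).2 (by linarith))

lemma monotone_ramp (hab : a < b) : Monotone (ramp a b) := fun _ _ hxy =>
  smoothTransition.monotone (div_le_div_of_nonneg_right (by linarith) (by linarith))

@[fun_prop]
lemma contDiff_ramp {n : ℕ∞} (a b : ℝ) : ContDiff ℝ n (ramp a b) :=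
  smoothTransition.contDiff.comp (by fun_prop)

end Ramp

def radius (p : ℝ × ℝ) : ℝ := √((1 - p.1) ^ 2 + p.2 ^ 2)

def cosAngle (p : ℝ × ℝ) : ℝ := (1 - p.1) / radius p

def angle (p : ℝ × ℝ) : ℝ := arccos (cosAngle p)

def polar (r θ : ℝ) : ℝ × ℝ := (1 - r * cos θ, r * sin θ)

def tangent (p : ℝ × ℝ) : ℝ × ℝ := (p.2, 1 - p.1)

def rotate (ω : ℝ) (p : ℝ × ℝ) : ℝ × ℝ :=
  (1 - ((1 - p.1) * cos ω - p.2 * sin ω), (1 - p.1) * sin ω + p.2 * cos ω)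

section Polar

variable {p : ℝ × ℝ} {r θ ω : ℝ}

lemma radius_nonneg (p : ℝ × ℝ) : 0 ≤ radius p := sqrt_nonneg _

lemma sq_radius (p : ℝ × ℝ) : radius p ^ 2 = (1 - p.1) ^ 2 + p.2 ^ 2 :=
  sq_sqrt (by positivity)

lemma abs_le_radius (p : ℝ × ℝ) : |1 - p.1| ≤ radius p ∧ |p.2| ≤ radius p :=
  ⟨abs_le_sqrt (le_add_of_nonneg_right (sq_nonneg _)),
    abs_le_sqrt (le_add_of_nonneg_left (sq_nonneg _))⟩

lemma radius_eq_zero : radius p = 0 ↔ p = (1, 0) := by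
  rw [radius, sqrt_eq_zero (by positivity), Prod.ext_iff]
  constructor
  · intro h
    constructor <;> nlinarith [sq_nonneg (1 - p.1), sq_nonneg p.2]
  · rintro ⟨h1, h2⟩
    simp [h1, h2]

lemma radius_pos : 0 < radius p ↔ p ≠ (1, 0) := by
  rw [(radius_nonneg p).lt_iff_ne', Ne, radius_eq_zero]

lemma continuous_radius : Continuous radius := by
  unfold radius; fun_prop

lemma dist_le_radius (p : ℝ × ℝ) : dist p (1, 0) ≤ radius p := by
  rw [Prod.dist_eq, Real.dist_eq, Real.dist_eq, abs_sub_comm, sub_zero]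
  exact max_le (abs_le_radius p).1 (abs_le_radius p).2

lemma radius_polar (hr : 0 ≤ r) (θ : ℝ) : radius (polar r θ) = r := by
  have : (1 - (1 - r * cos θ)) ^ 2 + (r * sin θ) ^ 2 = r ^ 2 := by
    linear_combination r ^ 2 * sin_sq_add_cos_sq θ
  rw [radius, polar, this, sqrt_sq hr]

lemma polar_zero (θ : ℝ) : polar 0 θ = (1, 0) := by simp [polar]

lemma cosAngle_polar (hr : 0 < r) (θ : ℝ) : cosAngle (polar r θ) = cos θ := by
  rw [cosAngle, radius_polar hr.le, polar]
  field_simp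
  ring

lemma abs_cosAngle_le_one (p : ℝ × ℝ) : |cosAngle p| ≤ 1 := by
  rw [cosAngle, abs_div, abs_of_nonneg (radius_nonneg p)]
  exact div_le_one_of_le₀ (abs_le_radius p).1 (radius_nonneg p)

lemma polar_radius_angle (hp : 0 ≤ p.2) : polar (radius p) (angle p) = p := by
  rcases (radius_nonneg p).eq_or_lt with hr | hr
  · rw [← hr, polar_zero, (radius_eq_zero.1 hr.symm)]
  obtain ⟨hc1, hc2⟩ := abs_le.1 (abs_cosAngle_le_one p)
  have hsin : 1 - cosAngle p ^ 2 = (p.2 / radius p) ^ 2 := by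
    rw [cosAngle]
    field_simp
    linear_combination sq_radius p
  rw [polar, angle, cos_arccos hc1 hc2, sin_arccos, hsin, sqrt_sq (by positivity), cosAngle]
  ext <;> field_simp; ring

lemma angle_mem_Icc (p : ℝ × ℝ) : angle p ∈ Icc 0 π := ⟨arccos_nonneg _, arccos_le_pi _⟩

lemma angle_le_pi_div_two (hp : p.1 ≤ 1) : angle p ≤ π / 2 :=
  arccos_le_pi_div_two.2 (div_nonneg (by linarith) (radius_nonneg p))

lemma injOn_polar (hr : 0 < r) : InjOn (polar r) (Icc 0 π) := fun a ha b hb h => by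
  have : r * cos a = r * cos b := by simpa [polar] using congrArg Prod.fst h
  exact injOn_cos ha hb (mul_left_cancel₀ hr.ne' this)

lemma hasDerivAt_polar (r θ : ℝ) : HasDerivAt (polar r) (tangent (polar r θ)) θ := by
  refine ((((hasDerivAt_cos θ).const_mul r).const_sub 1).prodMk
    ((hasDerivAt_sin θ).const_mul r)).congr_deriv ?_
  simp [tangent, polar]

lemma rotate_polar : rotate ω (polar r θ) = polar r (θ + ω) := by
  simp only [rotate, polar, cos_add, sin_add, Prod.mk.injEq]
  constructor <;> ring

lemma radius_rotate (ω : ℝ) (p : ℝ × ℝ) : radius (rotate ω p) = radius p := by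
  simp only [radius, rotate]
  congr 1
  linear_combination ((1 - p.1) ^ 2 + p.2 ^ 2) * sin_sq_add_cos_sq ω

lemma rotate_zero (p : ℝ × ℝ) : rotate 0 p = p := by simp [rotate]

lemma rotate_pi_div_two (p : ℝ × ℝ) : rotate (π / 2) p = (1 + p.2, 1 - p.1) := by
  simp [rotate]

lemma rotate_corner (ω : ℝ) : rotate ω (1, 0) = (1, 0) := by simp [rotate]

lemma continuousWithinAt_corner {F : ℝ × ℝ → ℝ × ℝ} {s : Set (ℝ × ℝ)} (hF : F (1, 0) = (1, 0))
    (hr : ∀ q ∈ s, radius (F q) = radius q) : ContinuousWithinAt F s (1, 0) := by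
  rw [ContinuousWithinAt, hF, tendsto_iff_dist_tendsto_zero]
  have h0 : Tendsto radius (𝓝[s] (1, 0)) (𝓝 0) := by
    simpa [ContinuousWithinAt, radius_eq_zero.2] using
      continuous_radius.continuousWithinAt (s := s) (x := ((1 : ℝ), (0 : ℝ)))
  refine squeeze_zero' (Eventually.of_forall fun _ => dist_nonneg) ?_ h0
  filter_upwards [self_mem_nhdsWithin] with q hq
  exact hr q hq ▸ dist_le_radius (F q)

lemma rotate_mem_quadrant {ω : ℝ} (hp : p ∈ strip) (hω : ω ∈ Icc 0 (π / 2)) :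
    rotate ω p ∈ quadrant := by
  obtain ⟨⟨hx0, hx1⟩, hy⟩ := hp
  have hc := cos_nonneg_of_mem_Icc ⟨by linarith [hω.1, pi_pos], hω.2⟩
  have hs := sin_nonneg_of_nonneg_of_le_pi hω.1 (by linarith [hω.2, pi_pos])
  have hc1 := cos_le_one ω
  have hy : 0 ≤ p.2 := hy
  have hx : 0 ≤ 1 - p.1 := by linarith
  constructor
  · show 0 ≤ 1 - ((1 - p.1) * cos ω - p.2 * sin ω)
    nlinarith [mul_nonneg hx (sub_nonneg.2 hc1), mul_nonneg hy hs]
  · show 0 ≤ (1 - p.1) * sin ω + p.2 * cos ω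
    positivity

lemma fderiv_rotate_comp_apply {f : ℝ × ℝ → ℝ} (hf : DifferentiableAt ℝ f p) (v : ℝ × ℝ) :
    fderiv ℝ (fun q => rotate (f q) q) p v =
      ((v.1 + fderiv ℝ f p v * p.2) * cos (f p) + (v.2 + fderiv ℝ f p v * (1 - p.1)) * sin (f p),
        (v.2 + fderiv ℝ f p v * (1 - p.1)) * cos (f p) -
          (v.1 + fderiv ℝ f p v * p.2) * sin (f p)) := by
  have hc : HasFDerivAt (fun q => cos (f q)) (-sin (f p) • fderiv ℝ f p) p :=
    (hasDerivAt_cos _).comp_hasFDerivAt p hf.hasFDerivAt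
  have hs : HasFDerivAt (fun q => sin (f q)) (cos (f p) • fderiv ℝ f p) p :=
    (hasDerivAt_sin _).comp_hasFDerivAt p hf.hasFDerivAt
  have h1 : HasFDerivAt (fun q : ℝ × ℝ => 1 - q.1) (-ContinuousLinearMap.fst ℝ ℝ ℝ) p :=
    hasFDerivAt_fst.const_sub 1
  have hd : HasFDerivAt (fun q => rotate (f q) q) _ p :=
    (((h1.mul hc).sub (hasFDerivAt_snd.mul hs)).const_sub 1).prodMk
      ((h1.mul hs).add (hasFDerivAt_snd.mul hc))
  rw [hd.fderiv]
  ext <;> simp only [smul_neg, neg_sub, ContinuousLinearMap.prod_apply, sub_apply, add_apply,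
    smul_apply, smul_eq_mul, ContinuousLinearMap.coe_snd', neg_mul, mul_neg, neg_apply,
    ContinuousLinearMap.coe_fst'] <;> ring

lemma injective_fderiv_rotate {f : ℝ × ℝ → ℝ} (hf : DifferentiableAt ℝ f p)
    (hτ : 0 ≤ fderiv ℝ f p (tangent p)) : Injective (fderiv ℝ (fun q => rotate (f q) q) p) := by
  set D := fderiv ℝ f p
  -- The derivative rotates `v + D v • tangent p`, so a kernel vector `v` is `-D v • tangent p`,
  -- and applying `D` gives `D v * (1 + D (tangent p)) = 0`.
  rw [injective_iff_map_eq_zero]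
  intro v hv
  obtain ⟨E1, E2⟩ := Prod.mk_eq_zero.1 ((fderiv_rotate_comp_apply hf v).symm.trans hv)
  have ha : v.1 + D v * p.2 = 0 := by
    linear_combination cos (f p) * E1 - sin (f p) * E2 -
      (v.1 + D v * p.2) * sin_sq_add_cos_sq (f p)
  have hb : v.2 + D v * (1 - p.1) = 0 := by
    linear_combination sin (f p) * E1 + cos (f p) * E2 -
      (v.2 + D v * (1 - p.1)) * sin_sq_add_cos_sq (f p)
  have hvτ : v = -D v • tangent p := by
    ext
    · show v.1 = -D v * p.2
      linarith
    · show v.2 = -D v * (1 - p.1)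
      linarith
  have hDv : D v = 0 := by
    have h := congrArg D hvτ
    rw [map_smul, smul_eq_mul] at h
    have : D v * (1 + D (tangent p)) = 0 := by linear_combination h
    exact (mul_eq_zero.1 this).resolve_right (by linarith)
  rw [hDv, zero_mul, add_zero] at ha hb
  exact Prod.ext ha hb

end Polar

/-- `cosAngle p` is the cosine of the polar angle `θ`; as `cos (π / 3) = 1 / 2` and
`17 / 20 < cos (π / 6)`, the angular factor is `1` for `θ ≥ π / 3` and `0` for `θ ≤ π / 6`. -/
def turn (p : ℝ × ℝ) : ℝ :=
  π / 2 * ((1 - ramp (1/2) (11/10) (radius p)) * (1 - ramp (1/2) (17/20) (cosAngle p)) +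
    ramp (1/2) (11/10) (radius p) * (ramp (1/5) (9/10) p.1 * ramp (1/5) (2/5) p.2))

def angleMap (θ : ℝ) : ℝ := θ + π / 2 * (1 - ramp (1/2) (17/20) (cos θ))

section Turn

variable {p : ℝ × ℝ} {r θ : ℝ}

lemma turn_mem_Icc (p : ℝ × ℝ) : turn p ∈ Icc 0 (π / 2) := by
  set g := ramp (1/2) (11/10) (radius p)
  set c := ramp (1/2) (17/20) (cosAngle p)
  set w := ramp (1/5) (9/10) p.1 * ramp (1/5) (2/5) p.2
  have hg := ramp_nonneg (1/2) (11/10) (radius p)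
  have hg' := ramp_le_one (1/2) (11/10) (radius p)
  have hc := ramp_nonneg (1/2) (17/20) (cosAngle p)
  have hc' := ramp_le_one (1/2) (17/20) (cosAngle p)
  have hw : 0 ≤ w := mul_nonneg (ramp_nonneg _ _ _) (ramp_nonneg _ _ _)
  have hw' : w ≤ 1 := mul_le_one₀ (ramp_le_one _ _ _) (ramp_nonneg _ _ _) (ramp_le_one _ _ _)
  have h0 : 0 ≤ (1 - g) * (1 - c) + g * w := by positivity
  have h1 : (1 - g) * (1 - c) + g * w ≤ 1 := by nlinarith
  exact ⟨by unfold turn; positivity, by unfold turn; nlinarith [pi_pos]⟩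

lemma turn_eq_zero_of_fst_lt (h : p.1 < 1/100) : turn p = 0 := by
  have hu : ramp (1/5) (9/10) p.1 = 0 := ramp_of_le (by norm_num) (by linarith)
  rcases le_or_gt (11/10) (radius p) with hr | hr
  · rw [turn, hu, ramp_of_ge (by norm_num) hr]
    ring
  · have hx := le_of_abs_le (abs_le_radius p).1
    have hc : 17/20 ≤ cosAngle p := by
      rw [cosAngle, le_div_iff₀ (by linarith)]
      linarith
    rw [turn, hu, ramp_of_ge (by norm_num) hc]
    ring

lemma turn_eq_zero_of_snd_lt (h0 : 0 ≤ p.2) (h1 : p.2 < 1/5) (h2 : p.1 < 1 - 5 * p.2) :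
    turn p = 0 := by
  have hv : ramp (1/5) (2/5) p.2 = 0 := ramp_of_le (by norm_num) h1.le
  have hx := le_of_abs_le (abs_le_radius p).1
  have hc : 17/20 ≤ cosAngle p := by
    rw [cosAngle, le_div_iff₀ (by nlinarith)]
    nlinarith [sq_radius p, radius_nonneg p]
  rw [turn, hv, ramp_of_ge (by norm_num) hc]
  ring

lemma turn_eq_pi_div_two (h1 : 49/50 < p.1) (h2 : p.1 ≤ 1) (h3 : 10 * (1 - p.1) < p.2) :
    turn p = π / 2 := by
  have hu : ramp (1/5) (9/10) p.1 = 1 := ramp_of_ge (by norm_num) (by linarith)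
  have hy := le_of_abs_le (abs_le_radius p).2
  have hc : ramp (1/2) (17/20) (cosAngle p) = 0 := by
    refine ramp_of_le (by norm_num) ?_
    rw [cosAngle, div_le_iff₀ (by linarith)]
    linarith
  rcases le_or_gt (radius p) (1/2) with hr | hr
  · rw [turn, hc, ramp_of_le (by norm_num) hr]
    ring
  · have hv : ramp (1/5) (2/5) p.2 = 1 :=
      ramp_of_ge (by norm_num) (by nlinarith [sq_radius p])
    rw [turn, hc, hu, hv]
    ring

lemma turn_polar (hr : 0 < r) (θ : ℝ) :
    turn (polar r θ) = π / 2 * ((1 - ramp (1/2) (11/10) r) * (1 - ramp (1/2) (17/20) (cos θ)) +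
      ramp (1/2) (11/10) r *
        (ramp (1/5) (9/10) (1 - r * cos θ) * ramp (1/5) (2/5) (r * sin θ))) := by
  rw [turn, radius_polar hr.le, cosAngle_polar hr]
  rfl

lemma monotoneOn_turn_polar (hr : 0 < r) :
    MonotoneOn (fun θ => turn (polar r θ)) (Icc 0 (π / 2)) := by
  intro a ha b hb hab
  have hcos : cos b ≤ cos a := cos_le_cos_of_nonneg_of_le_pi ha.1 (by linarith [hb.2, pi_pos]) hab
  have hsin : sin a ≤ sin b :=
    sin_le_sin_of_le_of_le_pi_div_two (by linarith [ha.1, pi_pos]) hb.2 hab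
  simp only [turn_polar hr]
  gcongr
  · exact sub_nonneg.2 (ramp_le_one _ _ _)
  · exact monotone_ramp (by norm_num) hcos
  all_goals first
    | exact ramp_nonneg _ _ _
    | exact monotone_ramp (by norm_num) (by gcongr)

lemma turn_polar_of_le (hr : 0 < r) (hr' : r ≤ 1/2) (θ : ℝ) :
    turn (polar r θ) = angleMap θ - θ := by
  rw [turn_polar hr, angleMap, ramp_of_le (by norm_num) hr']
  ring

lemma contDiffAt_turn {n : ℕ∞} (hp : p ≠ (1, 0)) : ContDiffAt ℝ n turn p := by
  have hr : ContDiffAt ℝ n radius p := by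
    refine ContDiffAt.sqrt (by fun_prop) ?_
    rw [← sq_radius]
    exact pow_ne_zero 2 (radius_pos.2 hp).ne'
  have hc : ContDiffAt ℝ n cosAngle p :=
    (contDiffAt_const.sub contDiffAt_fst).div hr (radius_pos.2 hp).ne'
  unfold turn
  fun_prop

end Turn

lemma hasDerivAt_angleMap (θ : ℝ) :
    HasDerivAt angleMap (1 + π / 2 * (deriv (ramp (1/2) (17/20)) (cos θ) * sin θ)) θ := by
  have hramp : HasDerivAt (ramp (1/2) (17/20)) (deriv (ramp (1/2) (17/20)) (cos θ)) (cos θ) :=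
    ((contDiff_ramp (n := 1) _ _).differentiable one_ne_zero _).hasDerivAt
  refine ((hasDerivAt_id θ).add
    (((hramp.comp θ (hasDerivAt_cos θ)).const_sub 1).const_mul (π / 2))).congr_deriv ?_
  simp

lemma admissible_angleMap : Admissible angleMap := by
  have hsqrt3 : 17/10 ≤ √3 := by nlinarith [sq_sqrt (show (0 : ℝ) ≤ 3 by norm_num), sqrt_nonneg 3]
  refine ⟨by unfold angleMap; fun_prop, fun t ht => ?_, fun t ht => ?_, fun t ht => ?_⟩
  · have hd := (monotone_ramp (show (1/2 : ℝ) < 17/20 by norm_num)).deriv_nonneg (x := cos t)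
    have hs := sin_nonneg_of_nonneg_of_le_pi ht.1 (by linarith [ht.2, pi_pos])
    rw [(hasDerivAt_angleMap t).deriv]
    positivity
  · have hc : 17/20 ≤ cos t := by
      calc (17/20 : ℝ) ≤ cos (π / 6) := by rw [cos_pi_div_six]; linarith
        _ ≤ cos t := cos_le_cos_of_nonneg_of_le_pi ht.1 (by linarith [pi_pos]) ht.2
    rw [angleMap, ramp_of_ge (by norm_num) hc]
    ring
  · have hc : cos t ≤ 1/2 := by
      calc cos t ≤ cos (π / 3) :=
            cos_le_cos_of_nonneg_of_le_pi (by positivity) (by linarith [ht.2, pi_pos]) ht.1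
        _ = 1/2 := cos_pi_div_three
    rw [angleMap, ramp_of_le (by norm_num) hc]
    ring

def straighten (p : ℝ × ℝ) : ℝ × ℝ := rotate (turn p) p

def fixedRegion : Set (ℝ × ℝ) := {p | p.1 < 1/100} ∪ {p | p.2 < 1/5 ∧ p.1 < 1 - 5 * p.2}

def rotatedRegion : Set (ℝ × ℝ) := {p | 49/50 < p.1 ∧ 10 * (1 - p.1) < p.2}

section Straighten

variable {p : ℝ × ℝ} {r θ : ℝ}

lemma straighten_polar (r θ : ℝ) : straighten (polar r θ) = polar r (θ + turn (polar r θ)) :=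
  rotate_polar

lemma radius_straighten (p : ℝ × ℝ) : radius (straighten p) = radius p := radius_rotate _ _

lemma straighten_corner : straighten (1, 0) = (1, 0) := rotate_corner _

lemma straighten_of_turn_eq_zero (h : turn p = 0) : straighten p = p := by
  rw [straighten, h, rotate_zero]

lemma straighten_of_turn_eq_pi_div_two (h : turn p = π / 2) :
    straighten p = (1 + p.2, 1 - p.1) := by
  rw [straighten, h, rotate_pi_div_two]

lemma isOpen_fixedRegion : IsOpen fixedRegion :=
  (isOpen_lt continuous_fst continuous_const).union
    ((isOpen_lt continuous_snd continuous_const).inter (isOpen_lt continuous_fst (by fun_prop)))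

lemma edges_subset_fixedRegion : ({0} ×ˢ Ici 0) ∪ (Ico 0 1 ×ˢ {0}) ⊆ fixedRegion := by
  rintro p (⟨hx, -⟩ | ⟨⟨-, hx⟩, hy⟩)
  · left
    simp_all
  · right
    simp_all

lemma straighten_eq_self (hp : p ∈ fixedRegion ∩ strip) : straighten p = p := by
  obtain ⟨h | ⟨hy, hx⟩, -, hy0⟩ := hp
  · exact straighten_of_turn_eq_zero (turn_eq_zero_of_fst_lt h)
  · exact straighten_of_turn_eq_zero (turn_eq_zero_of_snd_lt hy0 hy hx)

lemma isOpen_rotatedRegion : IsOpen rotatedRegion :=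
  (isOpen_lt continuous_const continuous_fst).inter (isOpen_lt (by fun_prop) continuous_snd)

lemma edge_subset_rotatedRegion : {1} ×ˢ Ioi 0 ⊆ rotatedRegion := by
  rintro p ⟨hx, hy⟩
  rw [mem_singleton_iff] at hx
  exact ⟨by rw [hx]; norm_num, by rw [hx, sub_self, mul_zero]; exact hy⟩

lemma straighten_eq_rotate (hp : p ∈ rotatedRegion ∩ strip) :
    straighten p = (1 + p.2, 1 - p.1) := by
  obtain ⟨⟨hx, hy⟩, ⟨-, hx1⟩, -⟩ := hp
  exact straighten_of_turn_eq_pi_div_two (turn_eq_pi_div_two hx hx1 hy)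

lemma straighten_polar_of_le (hr : r ∈ Icc 0 (1/2)) (θ : ℝ) :
    straighten (polar r θ) = polar r (angleMap θ) := by
  rcases hr.1.eq_or_lt with rfl | hr0
  · rw [polar_zero, polar_zero, straighten_corner]
  rw [straighten_polar, turn_polar_of_le hr0 hr.2, add_sub_cancel]

lemma mapsTo_straighten : MapsTo straighten strip quadrant := fun _ hp =>
  rotate_mem_quadrant hp (turn_mem_Icc _)

lemma exists_polar_of_mem_strip (hp : p ∈ strip) :
    ∃ r, 0 ≤ r ∧ ∃ θ ∈ Icc 0 (π / 2), polar r θ = p :=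
  ⟨radius p, radius_nonneg p, angle p, ⟨(angle_mem_Icc p).1, angle_le_pi_div_two hp.1.2⟩,
    polar_radius_angle hp.2⟩

lemma add_turn_mem_Icc (hθ : θ ∈ Icc 0 (π / 2)) (p : ℝ × ℝ) : θ + turn p ∈ Icc 0 π := by
  have := turn_mem_Icc p
  constructor <;> linarith [hθ.1, hθ.2, this.1, this.2]

lemma strictMonoOn_add_turn_polar (hr : 0 < r) :
    StrictMonoOn (fun θ => θ + turn (polar r θ)) (Icc 0 (π / 2)) := fun _ ha _ hb hab =>
  add_lt_add_of_lt_of_le hab (monotoneOn_turn_polar hr ha hb hab.le)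

lemma injOn_straighten : InjOn straighten strip := by
  intro p hp q hq h
  obtain ⟨r, hr, a, ha, rfl⟩ := exists_polar_of_mem_strip hp
  obtain ⟨s, hs, b, hb, rfl⟩ := exists_polar_of_mem_strip hq
  obtain rfl : r = s := by
    simpa only [radius_straighten, radius_polar hr, radius_polar hs] using congrArg radius h
  rcases hr.eq_or_lt with rfl | hr
  · rw [polar_zero, polar_zero]
  rw [straighten_polar, straighten_polar] at h
  rw [(strictMonoOn_add_turn_polar hr).injOn ha hb
    (injOn_polar hr (add_turn_mem_Icc ha _) (add_turn_mem_Icc hb _) h)]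

lemma exists_add_turn_polar_eq (hr : 0 < r) {φ : ℝ} (hφ : φ ∈ Icc 0 π) :
    ∃ θ ∈ Icc 0 (π / 2), θ + turn (polar r θ) = φ := by
  have hcont : ContinuousOn (fun θ => θ + turn (polar r θ)) (Icc 0 (π / 2)) := by
    refine continuousOn_id.add fun θ _ => ContinuousAt.continuousWithinAt ?_
    have hne : polar r θ ≠ (1, 0) := radius_pos.1 (by rwa [radius_polar hr.le])
    exact (contDiffAt_turn (n := 0) hne).continuousAt.comp
      (by unfold polar; fun_prop : Continuous (polar r)).continuousAt
  have h0 : 0 + turn (polar r 0) = 0 := by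
    rw [turn_eq_zero_of_snd_lt] <;> simp [polar, hr]
  have hπ : π / 2 + turn (polar r (π / 2)) = π := by
    rw [turn_eq_pi_div_two] <;> norm_num [polar, hr]
  exact intermediate_value_Icc (by positivity) hcont (by rwa [h0, hπ])

lemma surjOn_straighten : SurjOn straighten strip quadrant := by
  rintro w ⟨hw1, hw2⟩
  rcases (radius_nonneg w).eq_or_lt with hr | hr
  · rw [radius_eq_zero.1 hr.symm]
    exact ⟨(1, 0), by norm_num [strip], straighten_corner⟩
  obtain ⟨θ, hθ, hθw⟩ := exists_add_turn_polar_eq hr (angle_mem_Icc w)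
  have hw : straighten (polar (radius w) θ) = w := by
    rw [straighten_polar, hθw, polar_radius_angle hw2]
  refine ⟨polar (radius w) θ, mem_strip.2 ⟨?_, ?_, ?_⟩, hw⟩
  · by_contra! hneg
    have := straighten_of_turn_eq_zero (turn_eq_zero_of_fst_lt (hneg.trans (by norm_num)))
    rw [hw] at this
    exact hneg.not_ge (this ▸ hw1)
  · have := cos_nonneg_of_mem_Icc ⟨by linarith [hθ.1, pi_pos], hθ.2⟩
    show 1 - radius w * cos θ ≤ 1
    nlinarith
  · have := sin_nonneg_of_nonneg_of_le_pi hθ.1 (by linarith [hθ.2, pi_pos])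
    show 0 ≤ radius w * sin θ
    positivity

lemma bijOn_straighten : BijOn straighten strip quadrant :=
  ⟨mapsTo_straighten, injOn_straighten, surjOn_straighten⟩

lemma contDiffAt_straighten {n : ℕ∞} (hp : p ≠ (1, 0)) : ContDiffAt ℝ n straighten p := by
  have := contDiffAt_turn (n := n) hp
  unfold straighten rotate
  fun_prop

lemma contDiffOn_straighten : ContDiffOn ℝ (⊤ : ℕ∞) straighten (strip \ {(1, 0)}) :=
  fun _ hp => (contDiffAt_straighten hp.2).contDiffWithinAt

lemma continuousOn_straighten : ContinuousOn straighten strip := by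
  intro p _
  rcases eq_or_ne p (1, 0) with rfl | hp
  · exact continuousWithinAt_corner straighten_corner fun q _ => radius_straighten q
  · exact (contDiffAt_straighten (n := 0) hp).continuousAt.continuousWithinAt

lemma fderiv_turn_tangent_nonneg (hr : 0 < r) (hθ : θ ∈ Ioo 0 (π / 2)) :
    0 ≤ fderiv ℝ turn (polar r θ) (tangent (polar r θ)) := by
  have hne : polar r θ ≠ (1, 0) := radius_pos.1 (by rwa [radius_polar hr.le])
  have hd := ((contDiffAt_turn (n := 1) hne).differentiableAt one_ne_zero).hasFDerivAt
    |>.comp_hasDerivAt θ (hasDerivAt_polar r θ)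
  exact hd.nonneg_of_monotoneOn_nhds (Icc_mem_nhds hθ.1 hθ.2) (monotoneOn_turn_polar hr)

lemma exists_polar_of_lt (h1 : p.1 < 1) (h2 : 0 < p.2) :
    ∃ r > 0, ∃ θ ∈ Ioo 0 (π / 2), polar r θ = p := by
  have hr : 0 < radius p := h2.trans_le (le_of_abs_le (abs_le_radius p).2)
  refine ⟨radius p, hr, angle p, ⟨arccos_pos.2 ?_, arccos_lt_pi_div_two.2 ?_⟩,
    polar_radius_angle h2.le⟩
  · rw [cosAngle, div_lt_one hr]
    nlinarith [sq_radius p]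
  · exact div_pos (by linarith) hr

lemma injective_fderiv_straighten (h1 : p.1 < 1) (h2 : 0 < p.2) :
    Injective (fderiv ℝ straighten p) := by
  obtain ⟨r, hr, θ, hθ, rfl⟩ := exists_polar_of_lt h1 h2
  have hne : polar r θ ≠ (1, 0) := radius_pos.1 (by rwa [radius_polar hr.le])
  exact injective_fderiv_rotate ((contDiffAt_turn (n := 1) hne).differentiableAt one_ne_zero)
    (fderiv_turn_tangent_nonneg hr hθ)

lemma pos_of_straighten_pos (hp : p ∈ strip) (h1 : 0 < (straighten p).1)
    (h2 : 0 < (straighten p).2) : 0 < p.1 ∧ p.1 < 1 ∧ 0 < p.2 := by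
  obtain ⟨⟨hx0, hx1⟩, hy0⟩ := id hp
  have hy : 0 < p.2 := by
    refine lt_of_le_of_ne hy0 fun hy => ?_
    rcases hx1.lt_or_eq with hx | hx
    · rw [straighten_eq_self ⟨Or.inr (show p.2 < 1/5 ∧ p.1 < 1 - 5 * p.2 by
        constructor <;> linarith), hp⟩] at h2
      linarith
    · rw [show p = (1, 0) from Prod.ext hx hy.symm, straighten_corner] at h2
      exact h2.false
  refine ⟨lt_of_le_of_ne hx0 fun hx => ?_, lt_of_le_of_ne hx1 fun hx => ?_, hy⟩
  · rw [straighten_eq_self ⟨Or.inl (show p.1 < 1/100 by linarith), hp⟩] at h1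
    linarith
  · rw [straighten_eq_rotate ⟨⟨by linarith, by linarith⟩, hp⟩, hx, sub_self] at h2
    exact h2.false

end Straighten

def unstraighten : ℝ × ℝ → ℝ × ℝ := invFunOn straighten strip

section Unstraighten

variable {p w : ℝ × ℝ}

lemma invOn_unstraighten : InvOn unstraighten straighten strip quadrant :=
  bijOn_straighten.invOn_invFunOn

lemma unstraighten_eq (hp : p ∈ strip) (h : straighten p = w) : unstraighten w = p :=
  h ▸ invOn_unstraighten.1 hp

lemma radius_unstraighten (hw : w ∈ quadrant) : radius (unstraighten w) = radius w := by
  rw [← radius_straighten, invOn_unstraighten.2 hw]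

lemma unstraighten_eq_self (hw : w ∈ fixedRegion ∩ quadrant) : unstraighten w = w := by
  obtain ⟨hU, hw⟩ := hw
  have hs : w ∈ strip := by
    obtain ⟨hw1, hw2⟩ := mem_quadrant.1 hw
    refine mem_strip.2 ⟨hw1, ?_, hw2⟩
    rcases hU with h | h
    · exact (show w.1 < 1/100 from h).le.trans (by norm_num)
    · linarith [(show w.2 < 1/5 ∧ w.1 < 1 - 5 * w.2 from h).2]
  exact unstraighten_eq hs (straighten_eq_self ⟨hU, hs⟩)

lemma unstraighten_eq_unrotate (hw : (1 - w.2, w.1 - 1) ∈ rotatedRegion) (hq : w ∈ quadrant) :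
    unstraighten w = (1 - w.2, w.1 - 1) := by
  obtain ⟨h1, h2⟩ := hw
  have hs : (1 - w.2, w.1 - 1) ∈ strip := by
    refine mem_strip.2 ⟨?_, ?_, ?_⟩ <;> dsimp only at h1 h2 ⊢ <;> linarith [(mem_quadrant.1 hq).2]
  refine unstraighten_eq hs ?_
  rw [straighten_eq_rotate ⟨⟨h1, h2⟩, hs⟩]
  ext <;> simp

lemma contDiffAt_unstraighten_of_pos (h1 : 0 < w.1) (h2 : 0 < w.2) :
    ContDiffAt ℝ (⊤ : ℕ∞) unstraighten w := by
  obtain ⟨p, hp, rfl⟩ := surjOn_straighten (show w ∈ quadrant from ⟨h1.le, h2.le⟩)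
  obtain ⟨hx0, hx1, hy⟩ := pos_of_straighten_pos hp h1 h2
  have hne : p ≠ (1, 0) := fun h => hy.ne' (congrArg Prod.snd h)
  exact (contDiffAt_straighten hne).contDiffAt_of_leftInvOn (by simp)
    (injective_fderiv_straighten hx1 hy) (prod_mem_nhds (Icc_mem_nhds hx0 hx1) (Ici_mem_nhds hy))
    invOn_unstraighten.1

lemma contDiffWithinAt_unstraighten (hw : w ∈ quadrant) (hne : w ≠ (1, 0)) :
    ContDiffWithinAt ℝ (⊤ : ℕ∞) unstraighten quadrant w := by
  by_cases hU : w ∈ fixedRegion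
  · exact contDiffAt_id.contDiffWithinAt_of_eqOn isOpen_fixedRegion hU hw
      fun _ hq => unstraighten_eq_self hq
  simp only [fixedRegion, mem_union, mem_ofPred_eq, not_or, not_and, not_lt] at hU
  rcases (mem_quadrant.1 hw).2.eq_or_lt with hy | hy
  · have hx : 1 < w.1 := lt_of_le_of_ne (by simpa [← hy] using hU.2 (by rw [← hy]; norm_num))
      fun hx => hne (Prod.ext hx.symm hy.symm)
    refine ContDiffAt.contDiffWithinAt_of_eqOn (f := fun q => (1 - q.2, q.1 - 1)) (by fun_prop)
      (isOpen_rotatedRegion.preimage (by fun_prop)) ?_ hw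
      fun _ hq => unstraighten_eq_unrotate hq.1 hq.2
    show 49/50 < 1 - w.2 ∧ 10 * (1 - (1 - w.2)) < w.1 - 1
    constructor <;> linarith
  · exact (contDiffAt_unstraighten_of_pos (by linarith [hU.1]) hy).contDiffWithinAt

lemma contDiffOn_unstraighten :
    ContDiffOn ℝ (⊤ : ℕ∞) unstraighten (quadrant \ {(1, 0)}) :=
  fun _ hw => (contDiffWithinAt_unstraighten hw.1 hw.2).mono sdiff_subset

lemma continuousOn_unstraighten : ContinuousOn unstraighten quadrant := by
  intro w hw
  rcases eq_or_ne w (1, 0) with rfl | hne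
  · exact continuousWithinAt_corner (unstraighten_eq (by norm_num [strip]) straighten_corner)
      fun q hq => radius_unstraighten hq
  · exact (contDiffWithinAt_unstraighten hw hne).continuousWithinAt

end Unstraighten

end

end CornerStraightening

open CornerStraightening

/-- Existence of a corner-straightening map: a map `Φ` restricting to a
homeomorphism from `Q₁ = [0,1] × ℝ₊` onto `Q = ℝ₊ × ℝ₊`, a diffeomorphism away
from the corner point `(1, 0)` (in the sense of `ContDiffOn`), equal to the
identity on a relatively open subset of `Q₁` containing
`({0} × [0,∞)) ∪ ([0,1) × {0})`, equal to the clockwise rotation by `π/2`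
about `(1, 0)` on a relatively open subset of `Q₁` containing `{1} × (0,∞)`,
and which near `(1, 0)` preserves the radial coordinate and rescales the angle
by an admissible diffeomorphism `α : [0, π/2] → [0, π]`. -/
theorem exists_corner_straightening_map :
    ∃ (Φ Ψ : ℝ × ℝ → ℝ × ℝ) (α : ℝ → ℝ), Admissible α ∧
      BijOn Φ strip quadrant ∧
      ContinuousOn Φ strip ∧
      InvOn Ψ Φ strip quadrant ∧
      ContinuousOn Ψ quadrant ∧
      ContDiffOn ℝ (⊤ : ℕ∞) Φ (strip \ {((1 : ℝ), (0 : ℝ))}) ∧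
      ContDiffOn ℝ (⊤ : ℕ∞) Ψ (quadrant \ {((1 : ℝ), (0 : ℝ))}) ∧
      (∃ U : Set (ℝ × ℝ), IsOpen U ∧
        ({(0 : ℝ)} ×ˢ Ici (0 : ℝ)) ∪ (Ico (0 : ℝ) 1 ×ˢ {(0 : ℝ)}) ⊆ U ∧
        ∀ p ∈ U ∩ strip, Φ p = p) ∧
      (∃ V : Set (ℝ × ℝ), IsOpen V ∧
        ({(1 : ℝ)} ×ˢ Ioi (0 : ℝ)) ⊆ V ∧
        ∀ p ∈ V ∩ strip, Φ p = (1 + p.2, 1 - p.1)) ∧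
      (∃ δ : ℝ, 0 < δ ∧ ∀ r ∈ Icc (0 : ℝ) δ, ∀ θ ∈ Icc (0 : ℝ) (π / 2),
        Φ (1 - r * cos θ, r * sin θ) = (1 - r * cos (α θ), r * sin (α θ))) :=
  ⟨straighten, unstraighten, angleMap, admissible_angleMap, bijOn_straighten,
    continuousOn_straighten, invOn_unstraighten, continuousOn_unstraighten,
    contDiffOn_straighten, contDiffOn_unstraighten,
    ⟨fixedRegion, isOpen_fixedRegion, edges_subset_fixedRegion, fun _ => straighten_eq_self⟩,
    ⟨rotatedRegion, isOpen_rotatedRegion, edge_subset_rotatedRegion, fun _ => straighten_eq_rotate⟩,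
    ⟨1/2, by norm_num, fun r hr θ _ => straighten_polar_of_le hr θ⟩⟩
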